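/- Let Φ : ℝ → ℝ be bounded and continuous with M := sup_{x∈ℝ}|Φ(x)| > 0, let λ(V) := 2M + V, and define for V > 0: I(V) := (1/V)·∫₀^V [ z·(2z + Φ(−z) − Φ(z)) ] / [ √(V²−z²)·(z − Φ(z) + λ(V))·(−z − Φ(−z) + λ(V)) ] dz. Then there exists V₀ > 0 such that I(V) > 0 for all V > V₀; indeed lim inf_{V→∞} V·I(V) > 0. -/
import Mathlib

open Set Filter MeasureTheory

/-- The matching functional
`I(V) = (1/V)·∫₀^V z(2z+Φ(−z)−Φ(z)) / (√(V²−z²)(z−Φ(z)+λ(V))(−z−Φ(−z)+λ(V))) dz`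
with `λ(V) = 2M + V`, whose zeros correspond to traveling wave velocities. -/
noncomputable def Ifun (Φ : ℝ → ℝ) (M V : ℝ) : ℝ :=
  (1/V) * ∫ z in (0:ℝ)..V, z * (2*z + Φ (-z) - Φ z) /
    (Real.sqrt (V^2 - z^2) * (z - Φ z + (2*M + V)) * (-z - Φ (-z) + (2*M + V)))

noncomputable def fI (Φ : ℝ → ℝ) (M V z : ℝ) : ℝ :=
  z * (2*z + Φ (-z) - Φ z) /
    (Real.sqrt (V^2 - z^2) * (z - Φ z + (2*M + V)) * (-z - Φ (-z) + (2*M + V)))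

lemma Ifun_eq (Φ : ℝ → ℝ) (M V : ℝ) :
    Ifun Φ M V = (1/V) * ∫ z in (0:ℝ)..V, fI Φ M V z := rfl

set_option maxHeartbeats 1000000 in
lemma fI_intervalIntegrable (Φ : ℝ → ℝ) (M V : ℝ) (hΦc : Continuous Φ)
    (hb : ∀ x, |Φ x| ≤ M) (hM : 0 < M) (hV : 0 < V) :
    IntervalIntegrable (fI Φ M V) volume 0 V := by
  have hmeas : Measurable (fI Φ M V) := by
    apply Measurable.div
    · fun_prop
    · apply Measurable.mul
      · apply Measurable.mul
        · exact (Real.continuous_sqrt.comp (by fun_prop)).measurable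
        · fun_prop
      · fun_prop
  set K : ℝ := V * (2*V + 2*M) / (Real.sqrt V * V * M) with hK
  have hKnn : 0 ≤ K := by positivity
  have hg : IntervalIntegrable (fun z => K * ((V - z) ^ (-(1/2) : ℝ))) volume 0 V := by
    have h1 : IntervalIntegrable (fun x : ℝ => x ^ (-(1/2) : ℝ)) volume (V - 0) (V - V) := by
      apply intervalIntegral.intervalIntegrable_rpow'
      norm_num
    have h2 := h1.comp_sub_left V
    simp only [sub_sub_cancel, sub_zero, sub_self] at h2
    exact h2.const_mul K
  rw [intervalIntegrable_iff, uIoc_of_le hV.le] at hg ⊢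
  refine MeasureTheory.Integrable.mono hg hmeas.aestronglyMeasurable.restrict ?_
  refine (ae_restrict_iff' measurableSet_Ioc).2 (Filter.Eventually.of_forall ?_)
  rintro z ⟨hz0, hzV⟩
  have hVz : 0 ≤ V - z := by linarith
  have hrpow : (V - z) ^ (-(1/2) : ℝ) = 1 / Real.sqrt (V - z) := by
    rw [Real.rpow_neg hVz, Real.sqrt_eq_rpow]; norm_num
  have hrhs : ‖K * ((V - z) ^ (-(1/2) : ℝ))‖ = K / Real.sqrt (V - z) := by
    rw [Real.norm_eq_abs, abs_of_nonneg (by positivity), hrpow, mul_one_div]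
  rw [hrhs]
  rcases eq_or_lt_of_le hzV with rfl | hzV'
  · have : Real.sqrt (z^2 - z^2) = 0 := by simp
    rw [fI, this, zero_mul, zero_mul, div_zero, norm_zero]
    positivity
  · -- z < V
    have hs : 0 < Real.sqrt (V - z) := Real.sqrt_pos.2 (by linarith)
    have hsV : 0 < Real.sqrt V := Real.sqrt_pos.2 hV
    have hb1 := abs_le.1 (hb z)
    have hb2 := abs_le.1 (hb (-z))
    have hd2 : V ≤ z - Φ z + (2*M + V) := by linarith [hb1.2]
    have hd3 : M ≤ -z - Φ (-z) + (2*M + V) := by linarith [hb2.2]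
    have hsqrt : Real.sqrt (V - z) * Real.sqrt V ≤ Real.sqrt (V^2 - z^2) := by
      rw [← Real.sqrt_mul hVz]
      apply Real.sqrt_le_sqrt
      nlinarith
    have hden : Real.sqrt (V - z) * Real.sqrt V * V * M ≤
        Real.sqrt (V^2 - z^2) * (z - Φ z + (2*M + V)) * (-z - Φ (-z) + (2*M + V)) := by
      have h1 : Real.sqrt (V - z) * Real.sqrt V * V ≤
          Real.sqrt (V^2 - z^2) * (z - Φ z + (2*M + V)) := by
        apply mul_le_mul hsqrt hd2 hV.le (Real.sqrt_nonneg _)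
      exact mul_le_mul h1 hd3 hM.le
        (mul_nonneg (Real.sqrt_nonneg _) (le_trans hV.le hd2))
    have hnum : |z * (2*z + Φ (-z) - Φ z)| ≤ V * (2*V + 2*M) := by
      rw [abs_mul]
      apply mul_le_mul
      · rw [abs_of_nonneg hz0.le]; exact hzV'.le
      · calc |2*z + Φ (-z) - Φ z| ≤ |2*z| + |Φ (-z)| + |Φ z| := by
              apply (abs_sub _ _).trans; gcongr; exact abs_add_le _ _
          _ ≤ 2*V + 2*M := by
              rw [abs_of_nonneg (by linarith)]
              linarith [hb z, hb (-z)]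
      · exact abs_nonneg _
      · linarith
    rw [fI, Real.norm_eq_abs, abs_div]
    have hdenpos : 0 < Real.sqrt (V - z) * Real.sqrt V * V * M := by positivity
    rw [abs_of_nonneg (le_trans hdenpos.le hden)]
    calc |z * (2*z + Φ (-z) - Φ z)| /
          (Real.sqrt (V^2 - z^2) * (z - Φ z + (2*M + V)) * (-z - Φ (-z) + (2*M + V)))
        ≤ (V * (2*V + 2*M)) / (Real.sqrt (V - z) * Real.sqrt V * V * M) :=
          div_le_div₀ (by positivity) hnum hdenpos hden
      _ = K / Real.sqrt (V - z) := by
          rw [hK, div_div]; ring_nf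

set_option maxHeartbeats 1000000 in
lemma key_bound (Φ : ℝ → ℝ) (M V : ℝ) (hΦc : Continuous Φ)
    (hb : ∀ x, |Φ x| ≤ M) (hM : 0 < M) (hV : 100 * M ≤ V) :
    (1:ℝ)/64 ≤ ∫ z in (0:ℝ)..V, fI Φ M V z := by
  have hV0 : 0 < V := lt_of_lt_of_le (by positivity) hV
  have hI := fI_intervalIntegrable Φ M V hΦc hb hM hV0
  have hsub : ∀ a b : ℝ, 0 ≤ a → b ≤ V → a ≤ b →
      IntervalIntegrable (fI Φ M V) volume a b := by
    intro a b ha hbV hab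
    apply hI.mono_set
    rw [Set.uIcc_of_le hV0.le, Set.uIcc_of_le hab]
    exact Set.Icc_subset_Icc ha hbV
  have h3M0 : (0:ℝ) ≤ 3*M := by positivity
  have h3MV2 : 3*M ≤ V/2 := by linarith
  have hV234 : V/2 ≤ 3*V/4 := by linarith
  have h34V : 3*V/4 ≤ V := by linarith
  have i1 := hsub 0 (3*M) le_rfl (by linarith) h3M0
  have i2 := hsub (3*M) (V/2) h3M0 (by linarith) h3MV2
  have i3 := hsub (V/2) (3*V/4) (by linarith) (by linarith) hV234
  have i4 := hsub (3*V/4) V (by linarith) le_rfl h34V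
  have split1 := intervalIntegral.integral_add_adjacent_intervals i1
    ((i2.trans i3).trans i4)
  have split2 := intervalIntegral.integral_add_adjacent_intervals i2 (i3.trans i4)
  have split3 := intervalIntegral.integral_add_adjacent_intervals i3 i4
  -- Bound B1 on [0, 3M]
  have B1 : -(288*M^3/V^3) ≤ ∫ z in (0:ℝ)..(3*M), fI Φ M V z := by
    have hc : ∫ z in (0:ℝ)..(3*M), (-(96*M^2/V^3) : ℝ) = -(288*M^3/V^3) := by
      rw [intervalIntegral.integral_const, smul_eq_mul]; ring
    rw [← hc]
    apply intervalIntegral.integral_mono_on h3M0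
      (intervalIntegrable_const) i1
    rintro z ⟨hz0, hz3M⟩
    have hb1 := abs_le.1 (hb z)
    have hb2 := abs_le.1 (hb (-z))
    have hzV : z ≤ 3*V/100 := by linarith
    have habs : |fI Φ M V z| ≤ 96*M^2/V^3 := by
      have hsq : V/2 ≤ Real.sqrt (V^2 - z^2) := by
        have : Real.sqrt ((V/2)^2) ≤ Real.sqrt (V^2 - z^2) := by
          apply Real.sqrt_le_sqrt; nlinarith
        rwa [Real.sqrt_sq (by linarith)] at this
      have hd2 : V ≤ z - Φ z + (2*M + V) := by linarith
      have hd3 : V/2 ≤ -z - Φ (-z) + (2*M + V) := by linarith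
      have hden : V/2 * V * (V/2) ≤
          Real.sqrt (V^2 - z^2) * (z - Φ z + (2*M + V)) * (-z - Φ (-z) + (2*M + V)) := by
        apply mul_le_mul _ hd3 (by linarith)
          (mul_nonneg (Real.sqrt_nonneg _) (le_trans hV0.le hd2))
        apply mul_le_mul hsq hd2 (by linarith) (Real.sqrt_nonneg _)
      have hnum : |z * (2*z + Φ (-z) - Φ z)| ≤ 3*M * (8*M) := by
        rw [abs_mul]
        apply mul_le_mul
        · rw [abs_of_nonneg hz0]; exact hz3M
        · calc |2*z + Φ (-z) - Φ z| ≤ |2*z| + |Φ (-z)| + |Φ z| := by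
                apply (abs_sub _ _).trans; gcongr; exact abs_add_le _ _
            _ ≤ 8*M := by rw [abs_of_nonneg (by linarith)]; linarith [hb z, hb (-z)]
        · exact abs_nonneg _
        · positivity
      have hdenpos : 0 < V/2 * V * (V/2) := by positivity
      rw [fI, abs_div, abs_of_nonneg (le_trans hdenpos.le hden)]
      calc |z * (2*z + Φ (-z) - Φ z)| /
            (Real.sqrt (V^2 - z^2) * (z - Φ z + (2*M + V)) * (-z - Φ (-z) + (2*M + V)))
          ≤ (3*M * (8*M)) / (V/2 * V * (V/2)) := div_le_div₀ (by positivity) hnum hdenpos hden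
        _ = 96*M^2/V^3 := by field_simp; ring
    linarith [(abs_le.1 habs).1]
  -- Nonnegativity on [3M, V/2] and [3V/4, V]
  have nn : ∀ z : ℝ, 3*M ≤ z → z ≤ V → 0 ≤ fI Φ M V z := by
    intro z hz hzV
    have hb1 := abs_le.1 (hb z)
    have hb2 := abs_le.1 (hb (-z))
    apply div_nonneg
    · apply mul_nonneg (by linarith) (by linarith)
    · exact mul_nonneg (mul_nonneg (Real.sqrt_nonneg _) (by linarith)) (by linarith)
  have B2 : 0 ≤ ∫ z in (3*M)..(V/2), fI Φ M V z :=
    intervalIntegral.integral_nonneg h3MV2 (fun z hz => nn z hz.1 (by linarith [hz.2]))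
  have B4 : 0 ≤ ∫ z in (3*V/4)..V, fI Φ M V z :=
    intervalIntegral.integral_nonneg h34V (fun z hz => nn z (by linarith [hz.1]) hz.2)
  -- Main lower bound on [V/2, 3V/4]
  have B3 : (1:ℝ)/32 ≤ ∫ z in (V/2)..(3*V/4), fI Φ M V z := by
    have hc : ∫ z in (V/2)..(3*V/4), (1/(8*V) : ℝ) = 1/32 := by
      rw [intervalIntegral.integral_const, smul_eq_mul]
      field_simp; ring
    rw [← hc]
    apply intervalIntegral.integral_mono_on hV234 intervalIntegrable_const i3
    rintro z ⟨hz1, hz2⟩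
    have hb1 := abs_le.1 (hb z)
    have hb2 := abs_le.1 (hb (-z))
    have hnum : V^2/4 ≤ z * (2*z + Φ (-z) - Φ z) := by nlinarith
    have hd1 : Real.sqrt (V^2 - z^2) ≤ V := by
      have : Real.sqrt (V^2 - z^2) ≤ Real.sqrt (V^2) := by
        apply Real.sqrt_le_sqrt; nlinarith
      rwa [Real.sqrt_sq hV0.le] at this
    have hd2p : (0:ℝ) < z - Φ z + (2*M + V) := by linarith
    have hd3p : (0:ℝ) < -z - Φ (-z) + (2*M + V) := by linarith
    have hd2 : z - Φ z + (2*M + V) ≤ 2*V := by linarith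
    have hd3 : -z - Φ (-z) + (2*M + V) ≤ V := by linarith
    have hden : Real.sqrt (V^2 - z^2) * (z - Φ z + (2*M + V)) * (-z - Φ (-z) + (2*M + V))
        ≤ V * (2*V) * V := by
      apply mul_le_mul _ hd3 hd3p.le (by positivity)
      apply mul_le_mul hd1 hd2 hd2p.le hV0.le
    have hdenpos : 0 < Real.sqrt (V^2 - z^2) * (z - Φ z + (2*M + V)) *
        (-z - Φ (-z) + (2*M + V)) := by
      have hsqp : 0 < Real.sqrt (V^2 - z^2) := by
        apply Real.sqrt_pos.2; nlinarith
      positivity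
    have hstep : (V^2/4) / (V * (2*V) * V) ≤ fI Φ M V z := by
      rw [fI]
      exact div_le_div₀ (by nlinarith) hnum hdenpos hden
    have heq : (1:ℝ)/(8*V) = (V^2/4) / (V * (2*V) * V) := by
      field_simp; ring
    linarith
  -- Combine
  have htail : 288*M^3/V^3 ≤ 1/64 := by
    rw [div_le_iff₀ (by positivity)]
    nlinarith [pow_le_pow_left₀ (by positivity : (0:ℝ) ≤ 100*M) hV 3, pow_pos hM 3]
  linarith [split1, split2, split3]

/-- for bounded continuous `Φ` with `M = sup|Φ| > 0`, there is `V₀ > 0`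
with `I(V) > 0` for all `V > V₀`; indeed `liminf_{V→∞} V·I(V) > 0` (liminf taken in
the extended reals). -/
theorem stmt_12 (Φ : ℝ → ℝ) (M : ℝ) (hΦc : Continuous Φ)
    (hbdd : BddAbove (Set.range fun x => |Φ x|))
    (hM : M = ⨆ x, |Φ x|) (hMpos : 0 < M) :
    (∃ V₀ > 0, ∀ V : ℝ, V₀ < V → 0 < Ifun Φ M V) ∧
    0 < Filter.liminf (fun V : ℝ => ((V * Ifun Φ M V : ℝ) : EReal)) Filter.atTop := by
  have hb : ∀ x, |Φ x| ≤ M := by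
    intro x; rw [hM]; exact le_ciSup hbdd x
  have hpos : ∀ V : ℝ, 100 * M ≤ V → (1:ℝ)/64 ≤ ∫ z in (0:ℝ)..V, fI Φ M V z :=
    fun V hV => key_bound Φ M V hΦc hb hMpos hV
  constructor
  · refine ⟨100 * M, by positivity, fun V hV => ?_⟩
    have hV0 : 0 < V := lt_trans (by positivity) hV
    rw [Ifun_eq]
    have := hpos V hV.le
    have h1V : 0 < 1/V := by positivity
    nlinarith
  · have hev : ∀ᶠ V : ℝ in atTop,
        (((1:ℝ)/64 : ℝ) : EReal) ≤ ((V * Ifun Φ M V : ℝ) : EReal) := by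
      filter_upwards [Filter.eventually_ge_atTop (100 * M)] with V hV
      have hV0 : 0 < V := lt_of_lt_of_le (by positivity) hV
      have heq : V * Ifun Φ M V = ∫ z in (0:ℝ)..V, fI Φ M V z := by
        rw [Ifun_eq]; field_simp
      rw [heq, EReal.coe_le_coe_iff]
      exact hpos V hV
    have hle : (((1:ℝ)/64 : ℝ) : EReal) ≤ Filter.liminf
        (fun V : ℝ => ((V * Ifun Φ M V : ℝ) : EReal)) Filter.atTop :=
      Filter.le_liminf_of_le (by isBoundedDefault) hev
    exact lt_of_lt_of_le (EReal.coe_pos.2 (by norm_num : (0:ℝ) < 1/64)) hle
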